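/- With notation as above (T = min_α 1/(1−2C|α|₁) > 1), for x ∈ U_α = {v ∈ Q̂ : B(α,v) > C} and y ∈ V_α = {v ∈ Q̂ : B(α,v) ≥ 0}, one has |B(s_α · x, y)| ≥ T·|B(x,y)|. -/

import Mathlib

/-!
In an eigenbasis of `B` the vector `o` spans the unique negative eigendirection, so `B` is
positive definite on `o⊥`. For isotropic `u`, `v` with `u ⬝ᵥ o, v ⬝ᵥ o > 0` the vector
`(v ⬝ᵥ o) u - (u ⬝ᵥ o) v` lies in `o⊥` and has `B`-norm `-2 (u ⬝ᵥ o) (v ⬝ᵥ o) B(u,v)`, hence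
`B(u,v) ≤ 0`; likewise an isotropic `v` with `B(u,v) < 0` lies on the sheet `v ⬝ᵥ o > 0`.
The reflection `s x = x - 2 B(x,eᵢ) eᵢ` preserves the form and `B(x, s x) = -2 B(x,eᵢ)² < 0`, so
`s x` stays on the sheet of `x`, with `0 < s x ⬝ᵥ o = 1 - 2 B(x,eᵢ) oᵢ ≤ 1 - 2 C oᵢ`. Finally
`B(s x, y) = B(x,y) - 2 B(x,eᵢ) B(y,eᵢ) ≤ B(x,y) ≤ 0`, and dividing by `s x ⬝ᵥ o` gives the bound.
-/

open Matrix Finset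

namespace Matrix

variable {ι : Type*} [Fintype ι] {B : Matrix ι ι ℝ}

theorem IsHermitian.dotProduct_mulVec_comm (hB : B.IsHermitian) (x y : ι → ℝ) :
    x ⬝ᵥ B *ᵥ y = y ⬝ᵥ B *ᵥ x := by
  conv_lhs => rw [← hB.eq, conjTranspose_eq_transpose_of_trivial]
  exact dotProduct_transpose_mulVec B x y

variable [DecidableEq ι]

theorem star_mulVec_dotProduct_star_mulVec_of_mem_unitaryGroup {U : Matrix ι ι ℝ}
    (hU : U ∈ unitaryGroup ι ℝ) (a b : ι → ℝ) :
    (star U *ᵥ a) ⬝ᵥ (star U *ᵥ b) = a ⬝ᵥ b := by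
  rw [dotProduct_mulVec, star_eq_conjTranspose, conjTranspose_eq_transpose_of_trivial,
    vecMul_transpose, mulVec_mulVec, ← conjTranspose_eq_transpose_of_trivial,
    ← star_eq_conjTranspose, hU.2, one_mulVec]

theorem IsHermitian.star_eigenvectorUnitary_mul (hB : B.IsHermitian) :
    star (hB.eigenvectorUnitary : Matrix ι ι ℝ) * B =
      diagonal hB.eigenvalues * star (hB.eigenvectorUnitary : Matrix ι ι ℝ) := by
  have hdiag := hB.conjStarAlgAut_star_eigenvectorUnitary
  simp only [Unitary.conjStarAlgAut_apply, Unitary.coe_star, star_star,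
    RCLike.ofReal_real_eq_id, CompTriple.comp_eq] at hdiag
  rw [← hdiag, mul_assoc, hB.eigenvectorUnitary.2.2, mul_one]

theorem IsHermitian.dotProduct_mulVec_self_eq_sum (hB : B.IsHermitian) (v : ι → ℝ) :
    v ⬝ᵥ B *ᵥ v =
      ∑ k, hB.eigenvalues k * (star (hB.eigenvectorUnitary : Matrix ι ι ℝ) *ᵥ v) k ^ 2 := by
  rw [← star_mulVec_dotProduct_star_mulVec_of_mem_unitaryGroup hB.eigenvectorUnitary.2,
    mulVec_mulVec, hB.star_eigenvectorUnitary_mul, ← mulVec_mulVec, dotProduct]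
  exact Finset.sum_congr rfl fun k _ => by rw [mulVec_diagonal]; ring

theorem IsHermitian.star_eigenvectorUnitary_mulVec_apply_eq_zero (hB : B.IsHermitian)
    {o : ι → ℝ} {μ : ℝ} (ho : B *ᵥ o = μ • o) {k : ι} (hk : hB.eigenvalues k ≠ μ) :
    (star (hB.eigenvectorUnitary : Matrix ι ι ℝ) *ᵥ o) k = 0 := by
  have h := congrFun (congrArg (· *ᵥ o) hB.star_eigenvectorUnitary_mul) k
  simp only [← mulVec_mulVec, ho, mulVec_smul, mulVec_diagonal, Pi.smul_apply,
    smul_eq_mul] at h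
  exact (mul_eq_mul_right_iff.mp h.symm).resolve_left hk

theorem IsHermitian.dotProduct_mulVec_self_pos_of_dotProduct_eq_zero (hB : B.IsHermitian)
    {k₀ : ι} (hpos : ∀ k ≠ k₀, 0 < hB.eigenvalues k) {o : ι → ℝ} {μ : ℝ} (hμ : μ ≤ 0)
    (ho : B *ᵥ o = μ • o) (ho0 : o ≠ 0) {w : ι → ℝ} (hwo : w ⬝ᵥ o = 0) (hw : w ≠ 0) :
    0 < w ⬝ᵥ B *ᵥ w := by
  have hU := hB.eigenvectorUnitary.2
  set U : Matrix ι ι ℝ := ↑hB.eigenvectorUnitary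
  set c := star U *ᵥ w
  set e := star U *ᵥ o
  have he : e = Pi.single k₀ (e k₀) := by
    funext k
    rcases eq_or_ne k k₀ with rfl | hk
    · simp
    · rw [Pi.single_eq_of_ne hk]
      exact hB.star_eigenvectorUnitary_mulVec_apply_eq_zero ho ((hpos k hk).trans_le' hμ).ne'
  have he₀ : e k₀ ≠ 0 := by
    intro h
    rw [h, Pi.single_zero] at he
    apply ho0
    rw [← dotProduct_self_eq_zero, ← star_mulVec_dotProduct_star_mulVec_of_mem_unitaryGroup hU]
    change e ⬝ᵥ e = 0
    rw [he, dotProduct_zero]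
  have hc₀ : c k₀ = 0 := by
    have hce : c ⬝ᵥ e = 0 := by
      rw [star_mulVec_dotProduct_star_mulVec_of_mem_unitaryGroup hU, hwo]
    rw [he, dotProduct_single] at hce
    exact (mul_eq_zero.mp hce).resolve_right he₀
  obtain ⟨j, hj⟩ : ∃ j, c j ≠ 0 := by
    by_contra! h
    apply hw
    rw [← dotProduct_self_eq_zero, ← star_mulVec_dotProduct_star_mulVec_of_mem_unitaryGroup hU]
    change c ⬝ᵥ c = 0
    rw [show c = 0 from funext h, dotProduct_zero]
  have hjk : j ≠ k₀ := by rintro rfl; exact hj hc₀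
  rw [hB.dotProduct_mulVec_self_eq_sum]
  change 0 < ∑ k, _ * c k ^ 2
  refine sum_pos' (fun k _ => ?_)
    ⟨j, mem_univ j, mul_pos (hpos j hjk) (pow_two_pos_of_ne_zero hj)⟩
  rcases eq_or_ne k k₀ with rfl | hk
  · rw [hc₀, zero_pow two_ne_zero, mul_zero]
  · exact mul_nonneg (hpos k hk).le (sq_nonneg _)

end Matrix

theorem Finset.exists_forall_ne_pos_of_card_filter_neg_eq_one {ι : Type*} [Fintype ι]
    {f : ι → ℝ} (hneg : #{i | f i < 0} = 1) (hpos : #{i | 0 < f i} = Fintype.card ι - 1) :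
    ∃ k₀, ∀ k ≠ k₀, 0 < f k := by
  classical
  obtain ⟨k₀, hk₀⟩ := card_eq_one.mp hneg
  have hne : ∀ k, f k < 0 ∨ 0 < f k := by
    have hcard : #{i | f i < 0 ∨ 0 < f i} = #(univ : Finset ι) := by
      rw [filter_or, card_union_of_disjoint (disjoint_filter.mpr fun _ _ h => lt_asymm h),
        hneg, hpos, card_univ]
      have := Fintype.card_pos_iff.mpr ⟨k₀⟩
      omega
    exact fun k => card_filter_eq_iff.mp hcard k (mem_univ k)
  refine ⟨k₀, fun k hk => (hne k).resolve_left fun hk' => hk ?_⟩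
  exact mem_singleton.mp (hk₀ ▸ mem_filter.mpr ⟨mem_univ k, hk'⟩)

section LightCone

variable {ι : Type*} [Fintype ι] {B : Matrix ι ι ℝ} {o : ι → ℝ}

theorem dotProduct_mulVec_nonpos_of_isotropic (hB : B.IsHermitian)
    (hBo : ∀ w, w ⬝ᵥ o = 0 → w ≠ 0 → 0 < w ⬝ᵥ B *ᵥ w) {u v : ι → ℝ}
    (hu : u ⬝ᵥ B *ᵥ u = 0) (hv : v ⬝ᵥ B *ᵥ v = 0) (hu0 : 0 < u ⬝ᵥ o) (hv0 : 0 < v ⬝ᵥ o) :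
    u ⬝ᵥ B *ᵥ v ≤ 0 := by
  set w := (v ⬝ᵥ o) • u - (u ⬝ᵥ o) • v
  have hwo : w ⬝ᵥ o = 0 := by
    simp only [w, sub_dotProduct, smul_dotProduct, smul_eq_mul]
    ring
  have hww : w ⬝ᵥ B *ᵥ w = -(2 * (u ⬝ᵥ o) * (v ⬝ᵥ o)) * (u ⬝ᵥ B *ᵥ v) := by
    simp only [w, mulVec_sub, mulVec_smul, dotProduct_sub, sub_dotProduct, dotProduct_smul,
      smul_dotProduct, smul_eq_mul, hu, hv, hB.dotProduct_mulVec_comm v u]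
    ring
  by_contra! huv
  have hww_neg : w ⬝ᵥ B *ᵥ w < 0 := by
    rw [hww]
    have := mul_pos (mul_pos hu0 hv0) huv
    linarith
  have hw0 : w ≠ 0 := by
    rintro hw0
    simp [hw0] at hww_neg
  exact lt_asymm hww_neg (hBo w hwo hw0)

theorem dotProduct_pos_of_dotProduct_mulVec_neg (hB : B.IsHermitian)
    (hBo : ∀ w, w ⬝ᵥ o = 0 → w ≠ 0 → 0 < w ⬝ᵥ B *ᵥ w) {u v : ι → ℝ}
    (hu : u ⬝ᵥ B *ᵥ u = 0) (hv : v ⬝ᵥ B *ᵥ v = 0) (hu0 : 0 < u ⬝ᵥ o)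
    (huv : u ⬝ᵥ B *ᵥ v < 0) : 0 < v ⬝ᵥ o := by
  have hv0 : v ≠ 0 := by
    rintro rfl
    simp at huv
  have hvo : v ⬝ᵥ o ≠ 0 := fun h => (hBo v h hv0).ne' hv
  rcases hvo.lt_or_gt with hvo | hvo
  · have := dotProduct_mulVec_nonpos_of_isotropic hB hBo hu (v := -v)
      (by simp [mulVec_neg, hv]) hu0 (by simpa using hvo)
    simp only [mulVec_neg, dotProduct_neg] at this
    linarith
  · exact hvo

end LightCone

section SimpleReflection

variable {ι : Type*} [Fintype ι] [DecidableEq ι] {B : Matrix ι ι ℝ} {i : ι}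

def simpleReflection (B : Matrix ι ι ℝ) (i : ι) (x : ι → ℝ) : ι → ℝ :=
  x - (2 * (B *ᵥ x) i) • Pi.single i 1

theorem simpleReflection_dotProduct (x v : ι → ℝ) :
    simpleReflection B i x ⬝ᵥ v = x ⬝ᵥ v - 2 * (B *ᵥ x) i * v i := by
  rw [simpleReflection, sub_dotProduct, smul_dotProduct, single_dotProduct, smul_eq_mul, one_mul]

theorem mulVec_simpleReflection_apply (hBi : B i i = 1) (x : ι → ℝ) :
    (B *ᵥ simpleReflection B i x) i = -(B *ᵥ x) i := by
  rw [simpleReflection, mulVec_sub, mulVec_smul, mulVec_single_one]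
  simp only [Pi.sub_apply, Pi.smul_apply, col_apply, hBi, smul_eq_mul]
  ring

theorem simpleReflection_dotProduct_mulVec_self (hB : B.IsHermitian) (hBi : B i i = 1)
    (x : ι → ℝ) :
    simpleReflection B i x ⬝ᵥ B *ᵥ simpleReflection B i x = x ⬝ᵥ B *ᵥ x := by
  rw [simpleReflection_dotProduct, mulVec_simpleReflection_apply hBi,
    hB.dotProduct_mulVec_comm, simpleReflection_dotProduct]
  ring

theorem simpleReflection_dotProduct_pos {o : ι → ℝ} (hB : B.IsHermitian) (hBi : B i i = 1)
    (hBo : ∀ w, w ⬝ᵥ o = 0 → w ≠ 0 → 0 < w ⬝ᵥ B *ᵥ w) {x : ι → ℝ}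
    (hx : x ⬝ᵥ B *ᵥ x = 0) (hx0 : 0 < x ⬝ᵥ o) (hxi : (B *ᵥ x) i ≠ 0) :
    0 < simpleReflection B i x ⬝ᵥ o := by
  refine dotProduct_pos_of_dotProduct_mulVec_neg hB hBo hx
    ((simpleReflection_dotProduct_mulVec_self hB hBi x).trans hx) hx0 ?_
  rw [hB.dotProduct_mulVec_comm, simpleReflection_dotProduct, hx]
  nlinarith [pow_two_pos_of_ne_zero hxi]

end SimpleReflection

theorem stmt9_general (n : ℕ) (B : Matrix (Fin n) (Fin n) ℝ) (hB : B.IsHermitian)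
    (hdiag : ∀ i, B i i = 1)
    (hneg : (Finset.univ.filter (fun i => hB.eigenvalues i < 0)).card = 1)
    (hpos : (Finset.univ.filter (fun i => 0 < hB.eigenvalues i)).card = n - 1)
    (o : Fin n → ℝ) (μ : ℝ) (hμ : μ < 0) (ho : B.mulVec o = μ • o)
    (hopos : ∀ i, 0 < o i)
    (C : ℝ) (hC : 0 < C)
    (i : Fin n) (x y : Fin n → ℝ)
    (hxQ : x ⬝ᵥ B.mulVec x = 0) (hx1 : x ⬝ᵥ o = 1)
    (hyQ : y ⬝ᵥ B.mulVec y = 0) (hy1 : y ⬝ᵥ o = 1)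
    (hx : C < B.mulVec x i) (hy : 0 ≤ B.mulVec y i) :
    let T := Finset.univ.inf' ⟨i, Finset.mem_univ i⟩ (fun j => (1 - 2 * C * o j)⁻¹)
    let sx := x - (2 * B.mulVec x i) • (Pi.single i (1:ℝ) : Fin n → ℝ)
    let nx := (sx ⬝ᵥ o)⁻¹ • sx
    T * |x ⬝ᵥ B.mulVec y| ≤ |nx ⬝ᵥ B.mulVec y| := by
  intro T sx nx
  obtain ⟨k₀, hk₀⟩ := exists_forall_ne_pos_of_card_filter_neg_eq_one hneg
    (by rwa [Fintype.card_fin])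
  have hBo : ∀ w, w ⬝ᵥ o = 0 → w ≠ 0 → 0 < w ⬝ᵥ B *ᵥ w := fun w =>
    hB.dotProduct_mulVec_self_pos_of_dotProduct_eq_zero hk₀ hμ.le ho
      (fun h => (hopos i).ne' (congrFun h i))
  have hxi : 0 < (B *ᵥ x) i := hC.trans hx
  have hs : 0 < simpleReflection B i x ⬝ᵥ o :=
    simpleReflection_dotProduct_pos hB (hdiag i) hBo hxQ (hx1 ▸ one_pos) hxi.ne'
  have hT : T ≤ (simpleReflection B i x ⬝ᵥ o)⁻¹ := by
    refine (inf'_le _ (mem_univ i)).trans (inv_anti₀ hs ?_)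
    rw [simpleReflection_dotProduct, hx1]
    nlinarith [hopos i]
  have hxy : x ⬝ᵥ B *ᵥ y ≤ 0 :=
    dotProduct_mulVec_nonpos_of_isotropic hB hBo hxQ hyQ (hx1 ▸ one_pos) (hy1 ▸ one_pos)
  have hsy : simpleReflection B i x ⬝ᵥ B *ᵥ y ≤ x ⬝ᵥ B *ᵥ y := by
    rw [simpleReflection_dotProduct]
    nlinarith
  change T * _ ≤ |((simpleReflection B i x ⬝ᵥ o)⁻¹ • simpleReflection B i x) ⬝ᵥ B *ᵥ y|
  rw [smul_dotProduct, smul_eq_mul, abs_mul, abs_inv, abs_of_pos hs, abs_of_nonpos hxy,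
    abs_of_nonpos (hsy.trans hxy)]
  exact mul_le_mul hT (neg_le_neg hsy) (neg_nonneg.mpr hxy) (inv_nonneg.mpr hs.le)

/-- With `T = min_α 1/(1 - 2C|α|₁) > 1`, for `x ∈ U_α = {v ∈ Q̂ : B(α,v) > C}`
and `y ∈ V_α = {v ∈ Q̂ : B(α,v) ≥ 0}` one has `|B(s_α·x, y)| ≥ T·|B(x,y)|`. -/
theorem stmt9 (n : ℕ) (B : Matrix (Fin n) (Fin n) ℝ) (hB : B.IsHermitian)
    (hdiag : ∀ i, B i i = 1)
    (hoff : ∀ i j, i ≠ j → B i j ≤ 0)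
    (hneg : (Finset.univ.filter (fun i => hB.eigenvalues i < 0)).card = 1)
    (hpos : (Finset.univ.filter (fun i => 0 < hB.eigenvalues i)).card = n - 1)
    (o : Fin n → ℝ) (μ : ℝ) (hμ : μ < 0) (ho : B.mulVec o = μ • o)
    (honorm : o ⬝ᵥ o = 1) (hopos : ∀ i, 0 < o i)
    (C : ℝ) (hC : 0 < C) (hC2 : ∀ j, C < 1 / (2 * o j))
    (i : Fin n) (x y : Fin n → ℝ)
    (hxQ : x ⬝ᵥ B.mulVec x = 0) (hx1 : x ⬝ᵥ o = 1)
    (hyQ : y ⬝ᵥ B.mulVec y = 0) (hy1 : y ⬝ᵥ o = 1)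
    (hx : C < B.mulVec x i) (hy : 0 ≤ B.mulVec y i) :
    let T := Finset.univ.inf' ⟨i, Finset.mem_univ i⟩ (fun j => (1 - 2 * C * o j)⁻¹)
    let sx := x - (2 * B.mulVec x i) • (Pi.single i (1:ℝ) : Fin n → ℝ)
    let nx := (sx ⬝ᵥ o)⁻¹ • sx
    T * |x ⬝ᵥ B.mulVec y| ≤ |nx ⬝ᵥ B.mulVec y| :=
  stmt9_general n B hB hdiag hneg hpos o μ hμ ho hopos C hC i x y hxQ hx1 hyQ hy1 hx hy
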